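/- Let X and Y be real-valued integrable random variables on a probability space (Ω, F, P) and let α ∈ (0,1). Then AVaR_α(X + Y) ≤ AVaR_α(X) + AVaR_α(Y) (subadditivity of the Average-Value-at-Risk). -/

import Mathlib

/-!
Rockafellar–Uryasev. Let `q` be the quantile function of `X`, so that `VaR_t(X) = q t`. By the
layer-cake formula, `∫_α^1 (q t - c)⁺ dt` and `E (X - c)⁺` are the integrals over `s > 0` of
`1 - max α (F (c + s))` and `1 - F (c + s)`, with `F` the cdf; so the first is at most the second,
with equality when `F c ≥ α`, e.g. at `c = q α`. Hence `AVaR_α(X) ≤ c + E (X - c)⁺ / (1 - α)` for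
every `c`, with equality at `c = VaR_α(X)`. Taking `c = VaR_α(X) + VaR_α(Y)` for `X + Y` and using
`(x + y - a - b)⁺ ≤ (x - a)⁺ + (y - b)⁺` gives subadditivity.
-/

open MeasureTheory

/-- Value-at-Risk of `X` at level `t`: `VaR_t(X) = inf { x : P(X ≤ x) ≥ t }`. -/
noncomputable def VaR {Ω : Type*} [MeasurableSpace Ω] (P : Measure Ω) (t : ℝ)
    (X : Ω → ℝ) : ℝ :=
  sInf {x : ℝ | t ≤ (P {ω | X ω ≤ x}).toReal}

/-- Average-Value-at-Risk of `X` at level `α`: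
`AVaR_α(X) = (1/(1-α)) ∫_α^1 VaR_t(X) dt`. -/
noncomputable def AVaR {Ω : Type*} [MeasurableSpace Ω] (P : Measure Ω) (α : ℝ)
    (X : Ω → ℝ) : ℝ :=
  (1 - α)⁻¹ * ∫ t in α..1, VaR P t X

open ProbabilityTheory Set

lemma lt_max_sub_zero_iff {s x c : ℝ} (hs : 0 < s) : s < max (x - c) 0 ↔ c + s < x := by
  rw [lt_max_iff, or_iff_left hs.not_gt, lt_sub_iff_add_lt']

section PositivePart

variable {Ω : Type*} [MeasurableSpace Ω] {P : Measure Ω} {X Y : Ω → ℝ}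

lemma integral_max_sub_map (hX : AEMeasurable X P) (c : ℝ) :
    ∫ x, max (x - c) 0 ∂(P.map X) = ∫ ω, max (X ω - c) 0 ∂P :=
  integral_map hX (by fun_prop)

lemma integrable_id_map (hX : Integrable X P) : Integrable id (P.map X) :=
  (integrable_map_measure aestronglyMeasurable_id hX.aemeasurable).2 hX

variable [IsFiniteMeasure P]

lemma MeasureTheory.Integrable.max_sub_const_zero (hX : Integrable X P) (c : ℝ) :
    Integrable (fun ω => max (X ω - c) 0) P :=
  (hX.sub (integrable_const c)).pos_part

lemma integral_max_add_sub_add_le (hX : Integrable X P) (hY : Integrable Y P) (a b : ℝ) :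
    ∫ ω, max (X ω + Y ω - (a + b)) 0 ∂P
      ≤ ∫ ω, max (X ω - a) 0 ∂P + ∫ ω, max (Y ω - b) 0 ∂P := by
  rw [← integral_add (hX.max_sub_const_zero a) (hY.max_sub_const_zero b)]
  refine integral_mono ((hX.add hY).max_sub_const_zero _)
    ((hX.max_sub_const_zero a).add (hY.max_sub_const_zero b)) fun ω => ?_
  exact max_le (by linarith [le_max_left (X ω - a) 0, le_max_left (Y ω - b) 0])
    (add_nonneg (le_max_right _ _) (le_max_right _ _))

end PositivePart

namespace ProbabilityTheory

/-- Only meaningful for `t ∈ (0, 1)`: otherwise the set is empty or not bounded below and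
`sInf` returns `0`. -/
noncomputable def quantile (μ : Measure ℝ) (t : ℝ) : ℝ :=
  sInf {x : ℝ | t ≤ cdf μ x}

variable {μ : Measure ℝ} {α c t x : ℝ}

lemma le_cdf_quantile (ht : t ∈ Ioo 0 1) : t ≤ cdf μ (quantile μ t) := by
  have hne : {x | t ≤ cdf μ x}.Nonempty :=
    ((tendsto_cdf_atTop μ).eventually (eventually_ge_nhds ht.2)).exists
  refine ge_of_tendsto (((cdf μ).right_continuous _).mono Ioi_subset_Ici_self) ?_
  filter_upwards [self_mem_nhdsWithin] with x hx
  obtain ⟨y, hy, hyx⟩ := exists_lt_of_csInf_lt hne hx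
  exact hy.trans (monotone_cdf μ hyx.le)

lemma quantile_le_iff (ht : t ∈ Ioo 0 1) : quantile μ t ≤ x ↔ t ≤ cdf μ x := by
  refine ⟨fun h => (le_cdf_quantile ht).trans (monotone_cdf μ h), fun h => csInf_le ?_ h⟩
  obtain ⟨y, hy⟩ := ((tendsto_cdf_atBot μ).eventually (eventually_lt_nhds ht.1)).exists
  exact ⟨y, fun z hz => le_of_not_gt fun hzy =>
    (hz.trans_lt ((monotone_cdf μ hzy.le).trans_lt hy)).false⟩

lemma lt_quantile_iff (ht : t ∈ Ioo 0 1) : x < quantile μ t ↔ cdf μ x < t := by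
  simpa only [not_le] using (quantile_le_iff ht).not

lemma monotoneOn_quantile : MonotoneOn (quantile μ) (Ioo 0 1) :=
  fun _ hs _ ht hst => (quantile_le_iff hs).2 (hst.trans (le_cdf_quantile ht))

lemma quantile_eq_add_max_sub (hα : α ∈ Ioo 0 1) (ht : t ∈ Ioo α 1) :
    quantile μ t = quantile μ α + max (quantile μ t - quantile μ α) 0 := by
  have := monotoneOn_quantile (μ := μ) hα ⟨hα.1.trans ht.1, ht.2⟩ ht.1.le
  rw [max_eq_left (sub_nonneg.2 this)]
  ring

lemma setOf_lt_quantile (hα : 0 ≤ α) (x : ℝ) :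
    {t | x < quantile μ t} ∩ Ioo α 1 = Ioo (max α (cdf μ x)) 1 := by
  ext t
  simp only [mem_inter_iff, mem_ofPred_eq, mem_Ioo, max_lt_iff]
  constructor
  · rintro ⟨hxt, hαt, ht1⟩
    exact ⟨⟨hαt, (lt_quantile_iff ⟨hα.trans_lt hαt, ht1⟩).1 hxt⟩, ht1⟩
  · rintro ⟨⟨hαt, hxt⟩, ht1⟩
    exact ⟨(lt_quantile_iff ⟨hα.trans_lt hαt, ht1⟩).2 hxt, hαt, ht1⟩

lemma aemeasurable_quantile (hα : 0 ≤ α) : AEMeasurable (quantile μ) (volume.restrict (Ioo α 1)) :=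
  aemeasurable_restrict_of_monotoneOn measurableSet_Ioo
    (monotoneOn_quantile.mono (Ioo_subset_Ioo_left hα))

lemma lintegral_max_quantile_sub (hα : 0 ≤ α) (c : ℝ) :
    ∫⁻ t in Ioo α 1, ENNReal.ofReal (max (quantile μ t - c) 0)
      = ∫⁻ s in Ioi 0, ENNReal.ofReal (1 - max α (cdf μ (c + s))) := by
  rw [lintegral_eq_lintegral_meas_lt (f := fun t => max (quantile μ t - c) 0) _
    (ae_of_all _ fun _ => le_max_right _ _)
    (((aemeasurable_quantile hα).sub_const c).max aemeasurable_const)]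
  refine setLIntegral_congr_fun measurableSet_Ioi fun s hs => ?_
  simp only [Measure.restrict_apply' measurableSet_Ioo, lt_max_sub_zero_iff (mem_Ioi.1 hs),
    setOf_lt_quantile hα, Real.volume_Ioo]

variable [IsProbabilityMeasure μ]

lemma lintegral_max_sub (c : ℝ) :
    ∫⁻ x, ENNReal.ofReal (max (x - c) 0) ∂μ
      = ∫⁻ s in Ioi 0, ENNReal.ofReal (1 - cdf μ (c + s)) := by
  rw [lintegral_eq_lintegral_meas_lt (f := fun x => max (x - c) 0) _
    (ae_of_all _ fun _ => le_max_right _ _)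
    ((measurable_id.sub_const c).max measurable_const).aemeasurable]
  refine setLIntegral_congr_fun measurableSet_Ioi fun s hs => ?_
  simp only [lt_max_sub_zero_iff (mem_Ioi.1 hs)]
  rw [ENNReal.ofReal_sub _ (cdf_nonneg μ _), ENNReal.ofReal_one, ofReal_cdf,
    ← prob_compl_eq_one_sub measurableSet_Iic, compl_Iic]
  rfl

lemma lintegral_max_quantile_sub_le (hα : 0 ≤ α) (c : ℝ) :
    ∫⁻ t in Ioo α 1, ENNReal.ofReal (max (quantile μ t - c) 0)
      ≤ ∫⁻ x, ENNReal.ofReal (max (x - c) 0) ∂μ := by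
  rw [lintegral_max_quantile_sub hα, lintegral_max_sub]
  exact lintegral_mono fun s =>
    ENNReal.ofReal_le_ofReal (by linarith [le_max_right α (cdf μ (c + s))])

lemma lintegral_max_quantile_sub_eq (hα : 0 ≤ α) (hc : α ≤ cdf μ c) :
    ∫⁻ t in Ioo α 1, ENNReal.ofReal (max (quantile μ t - c) 0)
      = ∫⁻ x, ENNReal.ofReal (max (x - c) 0) ∂μ := by
  rw [lintegral_max_quantile_sub hα, lintegral_max_sub]
  refine setLIntegral_congr_fun measurableSet_Ioi fun s hs => ?_
  rw [max_eq_right (hc.trans (monotone_cdf μ (le_add_of_nonneg_right (mem_Ioi.1 hs).le)))]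

lemma integrableOn_max_quantile_sub (hμ : Integrable id μ) (hα : 0 ≤ α) (c : ℝ) :
    IntegrableOn (fun t => max (quantile μ t - c) 0) (Ioo α 1) := by
  refine ⟨((aemeasurable_quantile hα).sub_const c).max aemeasurable_const |>.aestronglyMeasurable,
    (hasFiniteIntegral_iff_ofReal (ae_of_all _ fun _ => le_max_right _ _)).2 ?_⟩
  exact (lintegral_max_quantile_sub_le hα c).trans_lt (hμ.max_sub_const_zero c).lintegral_lt_top

lemma setIntegral_max_quantile_sub_le (hμ : Integrable id μ) (hα : 0 ≤ α) (c : ℝ) :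
    ∫ t in Ioo α 1, max (quantile μ t - c) 0 ≤ ∫ x, max (x - c) 0 ∂μ := by
  have hint : Integrable (fun x => max (x - c) 0) μ := hμ.max_sub_const_zero c
  rw [integral_eq_lintegral_of_nonneg_ae (f := fun t => max (quantile μ t - c) 0)
      (ae_of_all _ fun _ => le_max_right _ _)
      (integrableOn_max_quantile_sub hμ hα c).aestronglyMeasurable,
    integral_eq_lintegral_of_nonneg_ae (f := fun x => max (x - c) 0)
      (ae_of_all _ fun _ => le_max_right _ _) hint.aestronglyMeasurable]
  exact ENNReal.toReal_mono hint.lintegral_lt_top.ne (lintegral_max_quantile_sub_le hα c)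

lemma setIntegral_max_quantile_sub_eq (hμ : Integrable id μ) (hα : 0 ≤ α) (hc : α ≤ cdf μ c) :
    ∫ t in Ioo α 1, max (quantile μ t - c) 0 = ∫ x, max (x - c) 0 ∂μ := by
  rw [integral_eq_lintegral_of_nonneg_ae (f := fun t => max (quantile μ t - c) 0)
      (ae_of_all _ fun _ => le_max_right _ _)
      (integrableOn_max_quantile_sub hμ hα c).aestronglyMeasurable,
    integral_eq_lintegral_of_nonneg_ae (f := fun x => max (x - c) 0)
      (ae_of_all _ fun _ => le_max_right _ _) (hμ.max_sub_const_zero c).aestronglyMeasurable,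
    lintegral_max_quantile_sub_eq hα hc]

lemma setIntegral_const_add_max_quantile_sub (hμ : Integrable id μ) (hα₀ : 0 ≤ α) (hα₁ : α ≤ 1)
    (c : ℝ) :
    ∫ t in Ioo α 1, (c + max (quantile μ t - c) 0)
      = (1 - α) * c + ∫ t in Ioo α 1, max (quantile μ t - c) 0 := by
  rw [integral_add (integrable_const c) (integrableOn_max_quantile_sub hμ hα₀ c), setIntegral_const,
    Real.volume_real_Ioo_of_le hα₁, smul_eq_mul]

lemma integrableOn_quantile (hμ : Integrable id μ) (hα : α ∈ Ioo 0 1) :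
    IntegrableOn (quantile μ) (Ioo α 1) :=
  IntegrableOn.congr_fun
    ((integrable_const (quantile μ α)).add (integrableOn_max_quantile_sub hμ hα.1.le _))
    (fun _ ht => (quantile_eq_add_max_sub hα ht).symm) measurableSet_Ioo

lemma setIntegral_quantile_le (hμ : Integrable id μ) (hα : α ∈ Ioo 0 1) (c : ℝ) :
    ∫ t in Ioo α 1, quantile μ t ≤ (1 - α) * c + ∫ x, max (x - c) 0 ∂μ :=
  calc ∫ t in Ioo α 1, quantile μ t ≤ ∫ t in Ioo α 1, (c + max (quantile μ t - c) 0) :=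
        setIntegral_mono_on (integrableOn_quantile hμ hα)
          ((integrable_const c).add (integrableOn_max_quantile_sub hμ hα.1.le c)) measurableSet_Ioo
          fun t _ => by linarith [le_max_left (quantile μ t - c) 0]
    _ = (1 - α) * c + ∫ t in Ioo α 1, max (quantile μ t - c) 0 :=
        setIntegral_const_add_max_quantile_sub hμ hα.1.le hα.2.le c
    _ ≤ (1 - α) * c + ∫ x, max (x - c) 0 ∂μ := by
        gcongr
        exact setIntegral_max_quantile_sub_le hμ hα.1.le c

lemma setIntegral_quantile_eq (hμ : Integrable id μ) (hα : α ∈ Ioo 0 1) :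
    ∫ t in Ioo α 1, quantile μ t
      = (1 - α) * quantile μ α + ∫ x, max (x - quantile μ α) 0 ∂μ := by
  rw [setIntegral_congr_fun measurableSet_Ioo fun _ ht => quantile_eq_add_max_sub hα ht,
    setIntegral_const_add_max_quantile_sub hμ hα.1.le hα.2.le,
    setIntegral_max_quantile_sub_eq hμ hα.1.le (le_cdf_quantile hα)]

end ProbabilityTheory

section RiskMeasures

variable {Ω : Type*} [MeasurableSpace Ω] {P : Measure Ω} [IsProbabilityMeasure P] {X : Ω → ℝ}
  {α : ℝ}

lemma var_eq_quantile_map (hX : AEMeasurable X P) (t : ℝ) : VaR P t X = quantile (P.map X) t := by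
  have := Measure.isProbabilityMeasure_map hX
  simp only [VaR, quantile, cdf_eq_real, measureReal_def,
    Measure.map_apply_of_aemeasurable hX measurableSet_Iic]
  rfl

lemma avar_eq_setIntegral_quantile (hX : AEMeasurable X P) (hα : α ≤ 1) :
    AVaR P α X = (1 - α)⁻¹ * ∫ t in Ioo α 1, quantile (P.map X) t := by
  simp only [AVaR, intervalIntegral.integral_of_le hα, integral_Ioc_eq_integral_Ioo,
    var_eq_quantile_map hX]

lemma avar_le_add_integral_max_sub (hX : Integrable X P) (hα : α ∈ Ioo 0 1) (c : ℝ) :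
    AVaR P α X ≤ c + (1 - α)⁻¹ * ∫ ω, max (X ω - c) 0 ∂P := by
  have := Measure.isProbabilityMeasure_map hX.aemeasurable
  have h1α : 0 < 1 - α := sub_pos.2 hα.2
  rw [avar_eq_setIntegral_quantile hX.aemeasurable hα.2.le, ← integral_max_sub_map hX.aemeasurable]
  calc (1 - α)⁻¹ * ∫ t in Ioo α 1, quantile (P.map X) t
      ≤ (1 - α)⁻¹ * ((1 - α) * c + ∫ x, max (x - c) 0 ∂(P.map X)) := by
        gcongr
        exact setIntegral_quantile_le (integrable_id_map hX) hα c
    _ = c + (1 - α)⁻¹ * ∫ x, max (x - c) 0 ∂(P.map X) := by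
        field_simp

lemma avar_eq_var_add_integral_max_sub (hX : Integrable X P) (hα : α ∈ Ioo 0 1) :
    AVaR P α X = VaR P α X + (1 - α)⁻¹ * ∫ ω, max (X ω - VaR P α X) 0 ∂P := by
  have := Measure.isProbabilityMeasure_map hX.aemeasurable
  have h1α : 0 < 1 - α := sub_pos.2 hα.2
  rw [avar_eq_setIntegral_quantile hX.aemeasurable hα.2.le, var_eq_quantile_map hX.aemeasurable,
    ← integral_max_sub_map hX.aemeasurable, setIntegral_quantile_eq (integrable_id_map hX) hα]
  field_simp

end RiskMeasures

/-- Subadditivity of the Average-Value-at-Risk: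
`AVaR_α(X + Y) ≤ AVaR_α(X) + AVaR_α(Y)`. -/
theorem avar_subadditive
    {Ω : Type*} [MeasurableSpace Ω] (P : Measure Ω) [IsProbabilityMeasure P]
    (X Y : Ω → ℝ) (hX : Integrable X P) (hY : Integrable Y P)
    (α : ℝ) (hα : α ∈ Set.Ioo (0 : ℝ) 1) :
    AVaR P α (fun ω => X ω + Y ω) ≤ AVaR P α X + AVaR P α Y := by
  have h1α : 0 ≤ (1 - α)⁻¹ := inv_nonneg.2 (sub_nonneg.2 hα.2.le)
  set a := VaR P α X
  set b := VaR P α Y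
  calc AVaR P α (fun ω => X ω + Y ω)
      ≤ a + b + (1 - α)⁻¹ * ∫ ω, max (X ω + Y ω - (a + b)) 0 ∂P :=
        avar_le_add_integral_max_sub (hX.add hY) hα _
    _ ≤ a + b + (1 - α)⁻¹ * (∫ ω, max (X ω - a) 0 ∂P + ∫ ω, max (Y ω - b) 0 ∂P) := by
        gcongr
        exact integral_max_add_sub_add_le hX hY a b
    _ = AVaR P α X + AVaR P α Y := by
        rw [avar_eq_var_add_integral_max_sub hX hα, avar_eq_var_add_integral_max_sub hY hα]
        ring
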